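/- Let R be a root system spanning X with Weyl group W, α ∈ R, and X_α = ker α∨ (the root hyperplane in X). Every facet F of the chamber decomposition of X that spans X_α is contained in exactly one chamber C_α of the arrangement on X_α induced by the subsystem R ∩ X_α-hyperplanes; moreover the number of W_α-orbits on the set of such facets equals the number of facets contained in any single chamber C_α, where W_α is the Weyl group of the induced root system on X_α. -/

import Mathlib

noncomputable section

open scoped RealInnerProductSpace

variable {V : Type*} [NormedAddCommGroup V] [InnerProductSpace ℝ V] [FiniteDimensional ℝ V]

/-- A reduced (crystallographic) root system spanning `V`. -/
structure IsRootSystem (R : Set V) : Prop where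
  finite : R.Finite
  ne_zero : ∀ α ∈ R, α ≠ (0 : V)
  spans : Submodule.span ℝ R = ⊤
  reduced : ∀ α ∈ R, ∀ t : ℝ, t • α ∈ R → t = 1 ∨ t = -1
  reflect_mem : ∀ α ∈ R, ∀ β ∈ R, β - (2 * ⟪α, β⟫ / ⟪α, α⟫) • α ∈ R
  integral : ∀ α ∈ R, ∀ β ∈ R, ∃ n : ℤ, 2 * ⟪α, β⟫ = (n : ℝ) * ⟪α, α⟫

/-- Reflection in the hyperplane orthogonal to `α`. -/
def reflAt (α : V) : V ≃ₗᵢ[ℝ] V := Submodule.reflection ((ℝ ∙ α)ᗮ)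

/-- The Weyl group of `R`, generated by the reflections in the roots. -/
def weylGroup (R : Set V) : Subgroup (V ≃ₗᵢ[ℝ] V) :=
  Subgroup.closure {g | ∃ α ∈ R, g = reflAt α}

/-- Regular points: points on no root hyperplane. -/
def regularSet (R : Set V) : Set V := {x | ∀ α ∈ R, ⟪α, x⟫ ≠ 0}

/-- Weyl chambers: connected components of the set of regular points. -/
def chambers (R : Set V) : Set (Set V) :=
  {C | ∃ x ∈ regularSet R, C = connectedComponentIn (regularSet R) x}

/-- Points of the root hyperplane of `α` lying on no other root hyperplane. -/
def facetSet (R : Set V) (α : V) : Set V :=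
  {x | ⟪α, x⟫ = 0 ∧ ∀ β ∈ R, ⟪β, x⟫ = 0 → ∃ t : ℝ, β = t • α}

/-- Facets: codimension-one faces of Weyl chambers, i.e. connected components of a root
hyperplane with all the other root hyperplanes removed. -/
def facets (R : Set V) : Set (Set V) :=
  {F | ∃ α ∈ R, ∃ x ∈ facetSet R α, F = connectedComponentIn (facetSet R α) x}
/-- The chambers of the hyperplane `X_α` cut out by the roots orthogonal to `α`. -/
def hypChambers (R : Set V) (α : V) : Set (Set V) :=
  {C | ∃ x ∈ {y : V | ⟪α, y⟫ = 0 ∧ ∀ β ∈ R, ⟪α, β⟫ = 0 → ⟪β, y⟫ ≠ 0},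
    C = connectedComponentIn {y : V | ⟪α, y⟫ = 0 ∧ ∀ β ∈ R, ⟪α, β⟫ = 0 → ⟪β, y⟫ ≠ 0} x}

/-- The facets spanning the root hyperplane `X_α`. -/
def hypFacets (R : Set V) (α : V) : Set (Set V) :=
  {F | ∃ x ∈ facetSet R α, F = connectedComponentIn (facetSet R α) x}


/-! Let `S` be the roots orthogonal to `α`; it is a finite reduced set of vectors stable under its
own reflections, and its Weyl group `W_α` preserves both the facet points of `X_α` and the chambers
of `X_α`. A facet lies in `X_α` off every hyperplane of `S`, hence in exactly one chamber. The
chambers of `X_α` are the sign classes of the forms `⟪β, ·⟫`, `β ∈ S`, on `X_α` (sign is constant on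
connected sets avoiding `β⊥`, and sign classes are convex). `W_α` permutes them transitively and
freely (a Weyl group element preserving the positive roots is trivial, by the classical argument
with simple roots and the deletion step), so every `W_α`-orbit of facets meets a fixed chamber in
exactly one facet. -/

section

variable {E : Type*} [NormedAddCommGroup E] [InnerProductSpace ℝ E]

lemma reflAt_apply (β x : E) : reflAt β x = x - (2 * ⟪β, x⟫ / ⟪β, β⟫) • β := by
  rw [reflAt, Submodule.reflection_orthogonal_apply, Submodule.reflection_singleton_apply,
    real_inner_self_eq_norm_sq, neg_sub, two_smul, ← add_smul, mul_div_assoc, two_mul]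
  rfl

lemma reflAt_reflAt (β x : E) : reflAt β (reflAt β x) = x :=
  Submodule.reflection_involutive _ x

lemma reflAt_mul_self (β : E) : reflAt β * reflAt β = 1 :=
  LinearIsometryEquiv.ext (reflAt_reflAt β)

lemma reflAt_inv (β : E) : (reflAt β)⁻¹ = reflAt β :=
  inv_eq_of_mul_eq_one_right (reflAt_mul_self β)

lemma reflAt_self {β : E} (hβ : β ≠ 0) : reflAt β β = -β := by
  rw [reflAt_apply, mul_div_assoc, div_self (inner_self_ne_zero.mpr hβ)]
  module

lemma reflAt_of_inner_eq_zero {β x : E} (h : ⟪β, x⟫ = 0) : reflAt β x = x := by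
  simp [reflAt_apply, h]

lemma reflAt_neg (β : E) : reflAt (-β) = reflAt β := by
  ext x
  simp only [reflAt_apply, inner_neg_left, inner_neg_right, neg_neg]
  module

lemma inner_reflAt (β x y : E) : ⟪reflAt β x, y⟫ = ⟪x, reflAt β y⟫ := by
  conv_lhs => rw [← reflAt_reflAt β y]
  exact (reflAt β).inner_map_map x _

lemma reflAt_map (w : E ≃ₗᵢ[ℝ] E) (β : E) : reflAt (w β) = w * reflAt β * w⁻¹ := by
  ext x
  obtain ⟨y, rfl⟩ := w.surjective x
  simp [reflAt_apply, LinearIsometryEquiv.inner_map_map]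

def reflections (S : Set E) : Set (E ≃ₗᵢ[ℝ] E) := {g | ∃ β ∈ S, g = reflAt β}

lemma reflAt_mem_weylGroup {S : Set E} {β : E} (hβ : β ∈ S) : reflAt β ∈ weylGroup S :=
  Subgroup.subset_closure ⟨β, hβ, rfl⟩

lemma exists_list_prod_eq_of_mem_weylGroup {S : Set E} {w : E ≃ₗᵢ[ℝ] E} (hw : w ∈ weylGroup S) :
    ∃ l : List (E ≃ₗᵢ[ℝ] E), (∀ g ∈ l, g ∈ reflections S) ∧ l.prod = w := by
  induction hw using Subgroup.closure_induction'' with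
  | mem g hg => exact ⟨[g], fun g' hg' => List.mem_singleton.mp hg' ▸ hg, List.prod_singleton⟩
  | inv_mem g hg =>
    obtain ⟨β, hβ, rfl⟩ := hg
    exact ⟨[reflAt β], by simpa using ⟨β, hβ, rfl⟩, by simp [reflAt_inv]⟩
  | one => exact ⟨[], by simp, by simp⟩
  | mul u v _ _ hu hv =>
    obtain ⟨l₁, hl₁, rfl⟩ := hu
    obtain ⟨l₂, hl₂, rfl⟩ := hv
    exact ⟨l₁ ++ l₂, fun g hg => (List.mem_append.mp hg).elim (hl₁ g) (hl₂ g), List.prod_append⟩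

lemma mapsTo_of_mem_weylGroup {S A : Set E} (hA : ∀ β ∈ S, Set.MapsTo (reflAt β) A A)
    {w : E ≃ₗᵢ[ℝ] E} (hw : w ∈ weylGroup S) : Set.MapsTo w A A := by
  induction hw using Subgroup.closure_induction'' with
  | mem g hg => obtain ⟨β, hβ, rfl⟩ := hg; exact hA β hβ
  | inv_mem g hg => obtain ⟨β, hβ, rfl⟩ := hg; rw [reflAt_inv]; exact hA β hβ
  | one => exact Set.mapsTo_id A
  | mul u v _ _ hu hv => exact hu.comp hv

lemma image_eq_of_mem_weylGroup {S A : Set E} (hA : ∀ β ∈ S, Set.MapsTo (reflAt β) A A)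
    {w : E ≃ₗᵢ[ℝ] E} (hw : w ∈ weylGroup S) : ⇑w '' A = A := by
  refine (mapsTo_of_mem_weylGroup hA hw).image_subset.antisymm fun y hy => ?_
  exact ⟨w⁻¹ y, mapsTo_of_mem_weylGroup hA (inv_mem hw) hy, by simp⟩

lemma image_connectedComponentIn_of_mem_weylGroup {S A : Set E}
    (hA : ∀ β ∈ S, Set.MapsTo (reflAt β) A A) {w : E ≃ₗᵢ[ℝ] E} (hw : w ∈ weylGroup S)
    {x : E} (hx : x ∈ A) : ⇑w '' connectedComponentIn A x = connectedComponentIn A (w x) := by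
  have h := w.toHomeomorph.image_connectedComponentIn hx
  rwa [LinearIsometryEquiv.coe_toHomeomorph, image_eq_of_mem_weylGroup hA hw] at h

lemma mapsTo_reflAt_regularSet {S : Set E} {β : E} (hβ : Set.MapsTo (reflAt β) S S) :
    Set.MapsTo (reflAt β) (regularSet S) (regularSet S) := fun x hx γ hγ => by
  rw [← inner_reflAt]
  exact hx _ (hβ hγ)

lemma finite_weylGroup {S : Set E} (hfin : S.Finite) (hS : ∀ β ∈ S, Set.MapsTo (reflAt β) S S) :
    Finite (weylGroup S) := by
  have := hfin.to_subtype
  have := FiniteDimensional.span_of_finite ℝ hfin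
  refine Finite.of_injective (fun w : weylGroup S => fun β : S =>
    (⟨w.1 β, mapsTo_of_mem_weylGroup hS w.2 β.2⟩ : S)) fun u v huv => ?_
  have hspan : ∀ y ∈ Submodule.span ℝ S, u.1 y = v.1 y := fun y hy =>
    LinearMap.eqOn_span (f := u.1.toLinearEquiv.toLinearMap) (g := v.1.toLinearEquiv.toLinearMap)
      (fun β hβ => congrArg Subtype.val (congrFun huv ⟨β, hβ⟩)) hy
  have hperp : ∀ w ∈ weylGroup S, ∀ b ∈ (Submodule.span ℝ S)ᗮ, w b = b := fun w hw b hb =>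
    mapsTo_of_mem_weylGroup (A := {b}) (fun β hβ => by
      simpa using reflAt_of_inner_eq_zero
        ((Submodule.mem_orthogonal _ b).mp hb β (Submodule.subset_span hβ))) hw rfl
  refine Subtype.ext (LinearIsometryEquiv.ext fun x => ?_)
  obtain ⟨y, hy, b, hb, rfl⟩ := Submodule.exists_add_mem_mem_orthogonal (K := Submodule.span ℝ S) x
  simp only [map_add]
  rw [hspan y hy, hperp _ u.2 b hb, hperp _ v.2 b hb]

/-- Maximising `⟪w x, y⟫` over the finite group: a reflection in a root separating `w x` from `y`
would increase it. -/
lemma exists_mem_weylGroup_inner_mul_pos {S : Set E} (hfin : S.Finite)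
    (hS : ∀ β ∈ S, Set.MapsTo (reflAt β) S S) {x y : E} (hx : x ∈ regularSet S)
    (hy : y ∈ regularSet S) : ∃ w ∈ weylGroup S, ∀ β ∈ S, 0 < ⟪β, w x⟫ * ⟪β, y⟫ := by
  have := finite_weylGroup hfin hS
  obtain ⟨w, hw⟩ := Finite.exists_max fun w : weylGroup S => ⟪w.1 x, y⟫
  have hwx : w.1 x ∈ regularSet S :=
    mapsTo_of_mem_weylGroup (fun γ hγ => mapsTo_reflAt_regularSet (hS γ hγ)) w.2 hx
  refine ⟨w, w.2, fun β hβ => ?_⟩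
  refine (mul_ne_zero (hwx β hβ) (hy β hβ)).symm.lt_of_le (not_lt.mp fun hneg => ?_)
  have hββ : 0 < ⟪β, β⟫ := real_inner_self_pos.mpr fun h => hy β hβ (by simp [h])
  have hle := hw ⟨reflAt β * w, mul_mem (reflAt_mem_weylGroup hβ) w.2⟩
  simp only [LinearIsometryEquiv.coe_mul, Function.comp_apply, reflAt_apply, inner_sub_left,
    real_inner_smul_left] at hle
  have : 2 * ⟪β, w.1 x⟫ / ⟪β, β⟫ * ⟪β, y⟫ < 0 := by
    rw [div_mul_eq_mul_div, mul_assoc]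
    exact div_neg_of_neg_of_pos (by linarith) hββ
  linarith

lemma existsUnique_connectedComponentIn_superset {X : Type*} [TopologicalSpace X] {s t : Set X}
    (hst : s ⊆ t) {x : X} (hx : x ∈ s) :
    ∃! C, (∃ y ∈ t, C = connectedComponentIn t y) ∧ connectedComponentIn s x ⊆ C := by
  refine ⟨connectedComponentIn t x, ⟨⟨x, hst hx, rfl⟩, connectedComponentIn_mono x hst⟩, ?_⟩
  rintro _ ⟨⟨y, -, rfl⟩, hsub⟩
  exact connectedComponentIn_eq (hsub (mem_connectedComponentIn hx))

lemma inner_mul_pos_of_mem_connectedComponentIn {S s : Set E} (hs : s ⊆ regularSet S)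
    {x y : E} (hy : y ∈ connectedComponentIn s x) : ∀ β ∈ S, 0 < ⟪β, x⟫ * ⟪β, y⟫ := by
  intro β hβ
  have hx : x ∈ s := connectedComponentIn_nonempty_iff.mp ⟨y, hy⟩
  set f : E → ℝ := fun u => ⟪β, x⟫ * ⟪β, u⟫
  have hfx : 0 < f x := mul_self_pos.mpr (hs hx β hβ)
  by_contra! hfy
  have h0 : (0 : ℝ) ∈ Set.Icc (f y) (f x) := ⟨hfy, hfx.le⟩
  obtain ⟨u, hu, hfu⟩ := (isPreconnected_connectedComponentIn.image f
    (by fun_prop : Continuous f).continuousOn).Icc_subset ⟨y, hy, rfl⟩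
    ⟨x, mem_connectedComponentIn hx, rfl⟩ h0
  rcases mul_eq_zero.mp hfu with h | h
  · exact hs hx β hβ h
  · exact hs (connectedComponentIn_subset s x hu) β hβ h

lemma mem_connectedComponentIn_of_inner_mul_pos {S L : Set E} (hL : Convex ℝ L) {x y : E}
    (hx : x ∈ L) (hy : y ∈ L) (hxy : ∀ β ∈ S, 0 < ⟪β, x⟫ * ⟪β, y⟫) :
    y ∈ connectedComponentIn (L ∩ regularSet S) x := by
  have hseg : segment ℝ x y ⊆ L ∩ regularSet S := by
    intro u hu
    refine ⟨hL.segment_subset hx hy hu, fun β hβ => ?_⟩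
    obtain ⟨a, b, ha, hb, hab, rfl⟩ := hu
    have hxx : 0 < ⟪β, x⟫ * ⟪β, x⟫ := mul_self_pos.mpr (left_ne_zero_of_mul (hxy β hβ).ne')
    have := (convex_Ioi (0 : ℝ)) hxx (hxy β hβ) ha hb hab
    simp only [Set.mem_Ioi, smul_eq_mul] at this
    rw [inner_add_right, real_inner_smul_right, real_inner_smul_right]
    exact fun h => this.ne' (by linear_combination ⟪β, x⟫ * h)
  exact (convex_segment x y).isPreconnected.subset_connectedComponentIn
    (left_mem_segment ℝ x y) hseg (right_mem_segment ℝ x y)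

lemma inner_nonneg_of_mem_hull {D : Set E} {u x : E} (hD : ∀ v ∈ D, 0 ≤ ⟪v, u⟫)
    (hx : x ∈ PointedCone.hull ℝ D) : 0 ≤ ⟪x, u⟫ := by
  induction hx using Submodule.span_induction with
  | mem v hv => exact hD v hv
  | zero => simp
  | add v w _ _ hv hw => rw [inner_add_left]; exact add_nonneg hv hw
  | smul c v _ hv => rw [← Nonneg.coe_smul, real_inner_smul_left]; exact mul_nonneg c.2 hv

lemma inner_pos_of_mem_hull {D : Set E} {u x : E} (hD : ∀ v ∈ D, 0 < ⟪v, u⟫)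
    (hx : x ∈ PointedCone.hull ℝ D) (hx0 : x ≠ 0) : 0 < ⟪x, u⟫ := by
  suffices h : x = 0 ∨ 0 < ⟪x, u⟫ from h.resolve_left hx0
  clear hx0
  induction hx using Submodule.span_induction with
  | mem v hv => exact .inr (hD v hv)
  | zero => exact .inl rfl
  | add v w _ _ hv hw =>
    rcases hv with rfl | hv
    · simpa using hw
    rcases hw with rfl | hw
    · simp [hv]
    exact .inr (by rw [inner_add_left]; exact add_pos hv hw)
  | smul c v _ hv =>
    rcases hv with rfl | hv
    · simp
    rcases c.2.eq_or_lt with hc | hc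
    · left; rw [← Nonneg.coe_smul, ← hc, zero_smul]
    · right; rw [← Nonneg.coe_smul, real_inner_smul_left]; exact mul_pos hc hv

lemma smul_mem_hull {M : Type*} [AddCommGroup M] [Module ℝ M] {D : Set M} {t : ℝ} (ht : 0 ≤ t)
    {x : M} (hx : x ∈ PointedCone.hull ℝ D) :
    t • x ∈ PointedCone.hull ℝ D :=
  Nonneg.coe_smul ⟨t, ht⟩ x ▸ Submodule.smul_mem _ _ hx

lemma exists_eq_smul_add_of_mem_hull {M : Type*} [AddCommGroup M] [Module ℝ M] {D : Set M}
    {δ x : M} (hδ : δ ∈ D)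
    (hx : x ∈ PointedCone.hull ℝ D) :
    ∃ a : ℝ, 0 ≤ a ∧ ∃ y ∈ PointedCone.hull ℝ (D \ {δ}), x = a • δ + y := by
  rw [← Set.insert_eq_of_mem hδ, ← Set.insert_sdiff_singleton, PointedCone.hull,
    Submodule.mem_span_insert] at hx
  obtain ⟨a, y, hy, rfl⟩ := hx
  exact ⟨a, a.2, y, hy, (Nonneg.coe_smul a δ).symm ▸ rfl⟩

structure IsReducedRootSet (S : Set E) : Prop where
  finite : S.Finite
  mapsTo_reflAt : ∀ β ∈ S, Set.MapsTo (reflAt β) S S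
  reduced : ∀ β ∈ S, ∀ t : ℝ, t • β ∈ S → t = 1 ∨ t = -1

lemma IsReducedRootSet.neg_mem {S : Set E} (hS : IsReducedRootSet S) {β : E} (hβ : β ∈ S) :
    -β ∈ S := by
  rcases eq_or_ne β 0 with rfl | hβ0
  · simpa using hβ
  · simpa [reflAt_self hβ0] using hS.mapsTo_reflAt β hβ hβ

def positiveRoots (S : Set E) (z : E) : Set E := {β ∈ S | 0 < ⟪β, z⟫}

/-- Rather than the textbook basis with sign-coherent coordinates, only inclusion-minimality of
the cone generators is used. -/
def IsSimpleSystem (S : Set E) (z : E) (Δ : Finset E) : Prop :=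
  Minimal (fun D : Finset E => (D : Set E) ⊆ positiveRoots S z ∧
    positiveRoots S z ⊆ PointedCone.hull ℝ (D : Set E)) Δ

lemma exists_isSimpleSystem {S : Set E} (hfin : S.Finite) (z : E) :
    ∃ Δ, IsSimpleSystem S z Δ := by
  have hP : (positiveRoots S z).Finite := hfin.subset (Set.sep_subset _ _)
  exact exists_minimal_of_wellFoundedLT _ ⟨hP.toFinset, by simp, by simp⟩

namespace IsSimpleSystem

variable {S : Set E} {z : E} {Δ : Finset E}

lemma subset (hΔ : IsSimpleSystem S z Δ) : (Δ : Set E) ⊆ positiveRoots S z := hΔ.prop.1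

lemma mem_hull (hΔ : IsSimpleSystem S z Δ) {β : E} (hβ : β ∈ positiveRoots S z) :
    β ∈ PointedCone.hull ℝ (Δ : Set E) :=
  hΔ.prop.2 hβ

lemma notMem_hull_diff (hΔ : IsSimpleSystem S z Δ) {δ : E} (hδ : δ ∈ Δ) :
    δ ∉ PointedCone.hull ℝ ((Δ : Set E) \ {δ}) := by
  classical
  intro h
  have hle : PointedCone.hull ℝ (Δ : Set E) ≤ PointedCone.hull ℝ (Δ.erase δ : Set E) := by
    refine Submodule.span_le.mpr fun v hv => ?_
    rcases eq_or_ne v δ with rfl | hvδ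
    · simpa using h
    · exact PointedCone.subset_hull (by simpa [hvδ] using hv)
  have hsub : Δ.erase δ ⊆ Δ := Finset.erase_subset δ Δ
  exact Finset.notMem_erase δ Δ <| hΔ.le_of_le
    ⟨(Finset.coe_subset.mpr hsub).trans hΔ.subset, hΔ.prop.2.trans hle⟩ hsub hδ

/-- If `s_δ γ` were negative, writing `γ` and `-s_δ γ` over the simple roots would put `δ` in the
cone of the other simple roots. -/
lemma reflAt_mem_positiveRoots (hS : IsReducedRootSet S) (hz : z ∈ regularSet S)
    (hΔ : IsSimpleSystem S z Δ) {δ γ : E} (hδ : δ ∈ Δ) (hγ : γ ∈ positiveRoots S z)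
    (hγδ : γ ≠ δ) : reflAt δ γ ∈ positiveRoots S z := by
  obtain ⟨hδS, hδz⟩ := hΔ.subset hδ
  have hrS : reflAt δ γ ∈ S := hS.mapsTo_reflAt δ hδS hγ.1
  refine ⟨hrS, (hz _ hrS).lt_or_gt.resolve_left fun hneg => ?_⟩
  obtain ⟨a, -, y, hy, hγa⟩ := exists_eq_smul_add_of_mem_hull hδ (hΔ.mem_hull hγ)
  have hy0 : y ≠ 0 := by
    rintro rfl
    rw [add_zero] at hγa
    rcases hS.reduced δ hδS a (hγa ▸ hγ.1) with rfl | rfl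
    · exact hγδ (by simpa using hγa)
    · have := hγ.2
      rw [hγa, neg_one_smul, inner_neg_left] at this
      linarith
  have hnegP : -reflAt δ γ ∈ positiveRoots S z := ⟨hS.neg_mem hrS, by rw [inner_neg_left]; linarith⟩
  obtain ⟨b, -, y', hy', hb⟩ := exists_eq_smul_add_of_mem_hull hδ (hΔ.mem_hull hnegP)
  set t := 2 * ⟪δ, γ⟫ / ⟪δ, δ⟫ - a - b
  have key : t • δ = y + y' := by
    rw [reflAt_apply] at hb
    linear_combination (norm := module) hb + hγa
  have hD : ∀ v ∈ (Δ : Set E) \ {δ}, 0 < ⟪v, z⟫ := fun v hv => (hΔ.subset hv.1).2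
  have hyz : 0 < ⟪y + y', z⟫ := by
    rw [inner_add_left]
    exact add_pos_of_pos_of_nonneg (inner_pos_of_mem_hull hD hy hy0)
      (inner_nonneg_of_mem_hull (fun v hv => (hD v hv).le) hy')
  have ht : 0 < t := by
    rw [← key, real_inner_smul_left] at hyz
    exact pos_of_mul_pos_left hyz hδz.le
  have hδt : t⁻¹ • (y + y') = δ := by rw [← key, inv_smul_smul₀ ht.ne']
  have h := smul_mem_hull (inv_nonneg.mpr ht.le) (add_mem hy hy')
  rw [hδt] at h
  exact hΔ.notMem_hull_diff hδ h

/-- Induction on `⟪γ, z⟫`: a non-simple positive root `γ` has `⟪δ, γ⟫ > 0` for some simple `δ`,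
and `s_γ` is the conjugate by `s_δ` of the reflection in the lower root `s_δ γ`. -/
lemma reflAt_mem_weylGroup (hS : IsReducedRootSet S) (hz : z ∈ regularSet S)
    (hΔ : IsSimpleSystem S z Δ) {γ : E} (hγ : γ ∈ positiveRoots S z) :
    reflAt γ ∈ weylGroup (Δ : Set E) := by
  have hwf : (positiveRoots S z).WellFoundedOn fun β γ => ⟪β, z⟫ < ⟪γ, z⟫ :=
    Set.wellFoundedOn_image.mp ((hS.finite.subset (Set.sep_subset _ _)).image _).wellFoundedOn
  refine hwf.induction (P := fun γ => reflAt γ ∈ weylGroup (Δ : Set E)) hγ fun γ hγ ih => ?_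
  by_cases hγΔ : γ ∈ Δ
  · exact _root_.reflAt_mem_weylGroup hγΔ
  obtain ⟨δ, hδ, hδγ⟩ : ∃ δ ∈ Δ, 0 < ⟪δ, γ⟫ := by
    by_contra! h
    have := inner_nonneg_of_mem_hull (u := -γ) (fun v hv => by simpa using h v hv)
      (hΔ.mem_hull hγ)
    rw [inner_neg_right, neg_nonneg] at this
    have hγ0 : γ = 0 := real_inner_self_nonpos.mp this
    exact hγ.2.ne' (by simp [hγ0])
  have hγ' := hΔ.reflAt_mem_positiveRoots hS hz hδ hγ (ne_of_mem_of_not_mem hδ hγΔ).symm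
  have hlt : ⟪reflAt δ γ, z⟫ < ⟪γ, z⟫ := by
    have hδδ : 0 < ⟪δ, δ⟫ := real_inner_self_pos.mpr fun h => by simpa [h] using (hΔ.subset hδ).2
    rw [reflAt_apply, inner_sub_left, real_inner_smul_left, sub_lt_self_iff]
    exact mul_pos (div_pos (mul_pos two_pos hδγ) hδδ) (hΔ.subset hδ).2
  have hδW := _root_.reflAt_mem_weylGroup (S := (Δ : Set E)) hδ
  rw [← reflAt_reflAt δ γ, reflAt_map]
  exact mul_mem (mul_mem hδW (ih _ hγ' hlt)) (inv_mem hδW)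

lemma weylGroup_le (hS : IsReducedRootSet S) (hz : z ∈ regularSet S)
    (hΔ : IsSimpleSystem S z Δ) : weylGroup S ≤ weylGroup (Δ : Set E) := by
  refine (Subgroup.closure_le _).mpr ?_
  rintro _ ⟨β, hβ, rfl⟩
  rcases (hz β hβ).lt_or_gt with hneg | hpos
  · rw [← reflAt_neg]
    exact hΔ.reflAt_mem_weylGroup hS hz ⟨hS.neg_mem hβ, by rw [inner_neg_left]; linarith⟩
  · exact hΔ.reflAt_mem_weylGroup hS hz ⟨hβ, hpos⟩

/-- The deletion step: at the first letter `s_{δ₁}` where `δ` changes sign, the tail `u` of the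
word has `u δ = δ₁`, so `s_{δ₁} u = u s_δ`. -/
lemma exists_shorter_word (hS : IsReducedRootSet S) (hz : z ∈ regularSet S)
    (hΔ : IsSimpleSystem S z Δ) {l : List (E ≃ₗᵢ[ℝ] E)} (hl : ∀ g ∈ l, g ∈ reflections Δ)
    {δ : E} (hδ : δ ∈ Δ) (hneg : ⟪l.prod δ, z⟫ < 0) :
    ∃ l' : List (E ≃ₗᵢ[ℝ] E), (∀ g ∈ l', g ∈ reflections Δ) ∧ l'.length + 1 = l.length ∧
      l'.prod = l.prod * reflAt δ := by
  induction l with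
  | nil => exact absurd (hΔ.subset hδ).2 (by simpa using hneg.le)
  | cons g l ih =>
    obtain ⟨δ₁, hδ₁, rfl⟩ := hl g List.mem_cons_self
    have hl' : ∀ g ∈ l, g ∈ reflections Δ := fun g hg => hl g (List.mem_cons_of_mem _ hg)
    by_cases hlδ : ⟪l.prod δ, z⟫ < 0
    · obtain ⟨l', hl'Δ, hlen, hprod⟩ := ih hl' hlδ
      refine ⟨reflAt δ₁ :: l', ?_, by simp [hlen], by simp [hprod, mul_assoc]⟩
      exact List.forall_mem_cons.mpr ⟨⟨δ₁, hδ₁, rfl⟩, hl'Δ⟩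
    · have hlW : l.prod ∈ weylGroup S := Subgroup.list_prod_mem _ fun g hg => by
        obtain ⟨δ', hδ', rfl⟩ := hl' g hg
        exact _root_.reflAt_mem_weylGroup (hΔ.subset hδ').1
      have hlδS : l.prod δ ∈ S :=
        mapsTo_of_mem_weylGroup hS.mapsTo_reflAt hlW (hΔ.subset hδ).1
      have hlδP : l.prod δ ∈ positiveRoots S z :=
        ⟨hlδS, (not_lt.mp hlδ).lt_of_ne' (hz _ hlδS)⟩
      have hδ₁eq : l.prod δ = δ₁ := by
        by_contra hne
        have := (hΔ.reflAt_mem_positiveRoots hS hz hδ₁ hlδP hne).2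
        rw [List.prod_cons, LinearIsometryEquiv.coe_mul, Function.comp_apply] at hneg
        linarith
      refine ⟨l, hl', rfl, ?_⟩
      rw [List.prod_cons, ← hδ₁eq, reflAt_map, inv_mul_cancel_right, mul_assoc, reflAt_mul_self,
        mul_one]

end IsSimpleSystem

/-- `w` preserves the positive roots; in a shortest word for `w` in the simple reflections, a last
letter `s_δ` would make the rest of the word send `δ` to a negative root, and the deletion step
would shorten the word. -/
theorem IsReducedRootSet.eq_one_of_inner_mul_pos {S : Set E} (hS : IsReducedRootSet S)
    {w : E ≃ₗᵢ[ℝ] E} (hw : w ∈ weylGroup S) {z : E} (hz : ∀ β ∈ S, 0 < ⟪β, z⟫ * ⟪β, w z⟫) :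
    w = 1 := by
  have hreg : z ∈ regularSet S := fun β hβ => left_ne_zero_of_mul (hz β hβ).ne'
  obtain ⟨Δ, hΔ⟩ := exists_isSimpleSystem hS.finite z
  have hpos : ∀ β ∈ positiveRoots S z, 0 < ⟪w β, z⟫ := fun β hβ => by
    have := hz (w β) (mapsTo_of_mem_weylGroup hS.mapsTo_reflAt hw hβ.1)
    rw [LinearIsometryEquiv.inner_map_map] at this
    exact pos_of_mul_pos_left this hβ.2.le
  obtain ⟨l, hl, rfl⟩ := exists_list_prod_eq_of_mem_weylGroup (hΔ.weylGroup_le hS hreg hw)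
  clear hw hz
  induction hn : l.length using Nat.strong_induction_on generalizing l with
  | _ n ih =>
  rcases l.eq_nil_or_concat with rfl | ⟨l₀, g, rfl⟩
  · rfl
  obtain ⟨δ, hδ, rfl⟩ := hl g (by simp)
  have hδ0 : δ ≠ 0 := fun h => hreg δ (hΔ.subset hδ).1 (by simp [h])
  have hneg : ⟪l₀.prod δ, z⟫ < 0 := by
    have := hpos δ (hΔ.subset hδ)
    rwa [List.concat_eq_append, List.prod_append, List.prod_singleton,
      LinearIsometryEquiv.coe_mul, Function.comp_apply, reflAt_self hδ0, map_neg, inner_neg_left,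
      neg_pos] at this
  have hl₀ : ∀ g ∈ l₀, g ∈ reflections Δ := fun g hg => hl g (by simp [hg])
  obtain ⟨l', hl', hlen, hprod⟩ := hΔ.exists_shorter_word hS hreg hl₀ hδ hneg
  rw [List.concat_eq_append, List.prod_append, List.prod_singleton, ← hprod] at hpos ⊢
  exact ih l'.length (by simp [← hn, ← hlen]) l' hl' hpos rfl

lemma ncard_orbits_eq_ncard {G : Subgroup (E ≃ₗᵢ[ℝ] E)} {𝓕 𝓨 : Set (Set E)} (h𝓨 : 𝓨 ⊆ 𝓕)
    (hex : ∀ F ∈ 𝓕, ∃ w ∈ G, ⇑w '' F ∈ 𝓨)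
    (huniq : ∀ F ∈ 𝓨, ∀ w ∈ G, ⇑w '' F ∈ 𝓨 → ⇑w '' F = F) :
    {O : Set (Set E) | ∃ F ∈ 𝓕, O = {F' | ∃ w ∈ G, F' = ⇑w '' F}}.ncard = 𝓨.ncard := by
  set orbit : Set E → Set (Set E) := fun F => {F' | ∃ w ∈ G, F' = ⇑w '' F}
  have horbit : ∀ F, ∀ w ∈ G, orbit (⇑w '' F) = orbit F := by
    intro F w hw
    ext F'
    constructor
    · rintro ⟨u, hu, rfl⟩
      exact ⟨u * w, mul_mem hu hw, by simp [Set.image_image]⟩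
    · rintro ⟨u, hu, rfl⟩
      exact ⟨u * w⁻¹, mul_mem hu (inv_mem hw), by simp [Set.image_image]⟩
  have himage : {O | ∃ F ∈ 𝓕, O = orbit F} = orbit '' 𝓨 := by
    ext O
    constructor
    · rintro ⟨F, hF, rfl⟩
      obtain ⟨w, hw, hwF⟩ := hex F hF
      exact ⟨_, hwF, horbit F w hw⟩
    · rintro ⟨F, hF, rfl⟩
      exact ⟨F, h𝓨 hF, rfl⟩
  rw [himage, Set.InjOn.ncard_image]
  intro F₁ hF₁ F₂ hF₂ h
  obtain ⟨w, hw, rfl⟩ : F₂ ∈ orbit F₁ := h ▸ ⟨1, one_mem G, by simp⟩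
  exact (huniq F₁ hF₁ w hw hF₂).symm

lemma inner_reflAt_of_inner_eq_zero {α β : E} (h : ⟪β, α⟫ = 0) (y : E) :
    ⟪α, reflAt β y⟫ = ⟪α, y⟫ := by
  rw [← inner_reflAt, reflAt_of_inner_eq_zero h]

lemma setOf_inner_eq_zero_inter_regularSet (R : Set E) (α : E) :
    {y : E | ⟪α, y⟫ = 0} ∩ regularSet {γ ∈ R | ⟪α, γ⟫ = 0} =
      {y | ⟪α, y⟫ = 0 ∧ ∀ β ∈ R, ⟪α, β⟫ = 0 → ⟪β, y⟫ ≠ 0} := by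
  ext y
  simp [regularSet, and_imp]

namespace IsRootSystem

variable {R : Set E}

lemma mapsTo_reflAt (hR : IsRootSystem R) {β : E} (hβ : β ∈ R) :
    Set.MapsTo (reflAt β) R R := fun γ hγ => by
  rw [reflAt_apply]
  exact hR.reflect_mem β hβ γ hγ

lemma isReducedRootSet_sep (hR : IsRootSystem R) (α : E) :
    IsReducedRootSet {γ ∈ R | ⟪α, γ⟫ = 0} where
  finite := hR.finite.subset (Set.sep_subset _ _)
  mapsTo_reflAt β hβ γ hγ := by
    refine ⟨hR.mapsTo_reflAt hβ.1 hγ.1, ?_⟩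
    rw [inner_reflAt_of_inner_eq_zero (by rw [real_inner_comm]; exact hβ.2), hγ.2]
  reduced β hβ t ht := hR.reduced β hβ.1 t ht.1

lemma facetSet_subset (hR : IsRootSystem R) (α : E) :
    facetSet R α ⊆ {y | ⟪α, y⟫ = 0 ∧ ∀ β ∈ R, ⟪α, β⟫ = 0 → ⟪β, y⟫ ≠ 0} := by
  refine fun y hy => ⟨hy.1, fun β hβ hαβ hβy => hR.ne_zero β hβ ?_⟩
  obtain ⟨t, rfl⟩ := hy.2 β hβ hβy
  rw [real_inner_smul_right, mul_eq_zero, inner_self_eq_zero] at hαβ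
  rcases hαβ with rfl | rfl <;> simp

lemma mapsTo_reflAt_facetSet (hR : IsRootSystem R) {α β : E} (hβ : β ∈ {γ ∈ R | ⟪α, γ⟫ = 0}) :
    Set.MapsTo (reflAt β) (facetSet R α) (facetSet R α) := by
  have hβα : ⟪β, α⟫ = 0 := by rw [real_inner_comm]; exact hβ.2
  refine fun y hy => ⟨by rw [inner_reflAt_of_inner_eq_zero hβα]; exact hy.1, fun γ hγ hγy => ?_⟩
  rw [← inner_reflAt] at hγy
  obtain ⟨t, ht⟩ := hy.2 _ (hR.mapsTo_reflAt hβ.1 hγ) hγy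
  refine ⟨t, ?_⟩
  rw [← reflAt_reflAt β γ, ht, map_smul, reflAt_of_inner_eq_zero hβα]

lemma exists_image_subset_of_mem_hypChambers (hR : IsRootSystem R) {α : E} {F C : Set E}
    (hF : F ∈ hypFacets R α) (hC : C ∈ hypChambers R α) :
    ∃ w ∈ weylGroup {γ ∈ R | ⟪α, γ⟫ = 0}, ⇑w '' F ∈ hypFacets R α ∧ ⇑w '' F ⊆ C := by
  have hS := hR.isReducedRootSet_sep α
  have hfacet := hR.facetSet_subset α
  rw [← setOf_inner_eq_zero_inter_regularSet] at hfacet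
  obtain ⟨x, hx, rfl⟩ := hF
  obtain ⟨x₀, hx₀, rfl⟩ := hC
  rw [← setOf_inner_eq_zero_inter_regularSet] at hx₀ ⊢
  obtain ⟨w, hw, hwx⟩ := exists_mem_weylGroup_inner_mul_pos hS.finite hS.mapsTo_reflAt
    (hfacet hx).2 hx₀.2
  have hmaps := fun β hβ => hR.mapsTo_reflAt_facetSet (α := α) (β := β) hβ
  have hwxF : w x ∈ facetSet R α := mapsTo_of_mem_weylGroup hmaps hw hx
  have hwxC := mem_connectedComponentIn_of_inner_mul_pos (L := {y | ⟪α, y⟫ = 0})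
    (convex_hyperplane (innerₛₗ ℝ α).isLinear 0) hx₀.1 (hfacet hwxF).1
    fun β hβ => mul_comm ⟪β, w x⟫ _ ▸ hwx β hβ
  refine ⟨w, hw, ?_⟩
  rw [image_connectedComponentIn_of_mem_weylGroup hmaps hw hx, connectedComponentIn_eq hwxC]
  exact ⟨⟨w x, hwxF, rfl⟩, connectedComponentIn_mono _ hfacet⟩

lemma image_eq_of_subset_of_mem_hypChambers (hR : IsRootSystem R) {α : E} {F C : Set E}
    (hC : C ∈ hypChambers R α) (hF : F ∈ hypFacets R α) (hFC : F ⊆ C)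
    {w : E ≃ₗᵢ[ℝ] E} (hw : w ∈ weylGroup {γ ∈ R | ⟪α, γ⟫ = 0}) (hwFC : ⇑w '' F ⊆ C) :
    ⇑w '' F = F := by
  obtain ⟨x, hx, rfl⟩ := hF
  obtain ⟨x₀, -, rfl⟩ := hC
  have hxF := mem_connectedComponentIn hx
  rw [connectedComponentIn_eq (hFC hxF)] at hwFC
  have hreg := (setOf_inner_eq_zero_inter_regularSet R α).symm.subset.trans
    Set.inter_subset_right
  have hw1 := (hR.isReducedRootSet_sep α).eq_one_of_inner_mul_pos hw
    (inner_mul_pos_of_mem_connectedComponentIn hreg (hwFC ⟨x, hxF, rfl⟩))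
  simp [hw1]

end IsRootSystem

end

theorem facets_in_hyperplane_chambers_general (R : Set V) (hR : IsRootSystem R)
    (α : V) :
    (∀ F ∈ hypFacets R α, ∃! C, C ∈ hypChambers R α ∧ F ⊆ C) ∧
    (∀ C ∈ hypChambers R α,
      {O : Set (Set V) | ∃ F ∈ hypFacets R α,
          O = {F' | ∃ w ∈ Subgroup.closure
                {g : V ≃ₗᵢ[ℝ] V | ∃ β ∈ {γ ∈ R | ⟪α, γ⟫ = 0}, g = reflAt β},
              F' = ⇑w '' F}}.ncard
        = {F ∈ hypFacets R α | F ⊆ C}.ncard) := by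
  refine ⟨fun F hF => ?_, fun C hC => ncard_orbits_eq_ncard (fun F hF => hF.1)
    (fun F hF => hR.exists_image_subset_of_mem_hypChambers hF hC)
    fun F hF w hw hwF => hR.image_eq_of_subset_of_mem_hypChambers hC hF.1 hF.2 hw hwF.2⟩
  obtain ⟨x, hx, rfl⟩ := hF
  exact existsUnique_connectedComponentIn_superset (hR.facetSet_subset α) hx

/-- Every facet spanning the root hyperplane `X_α` is contained in exactly one chamber of `X_α`
for the root system induced on `X_α`; moreover the number of orbits of the Weyl group `W_α` of
this induced system on the set of such facets equals the number of facets lying in any single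
chamber of `X_α`. -/
theorem facets_in_hyperplane_chambers (R : Set V) (hR : IsRootSystem R)
    (α : V) (hα : α ∈ R) :
    (∀ F ∈ hypFacets R α, ∃! C, C ∈ hypChambers R α ∧ F ⊆ C) ∧
    (∀ C ∈ hypChambers R α,
      {O : Set (Set V) | ∃ F ∈ hypFacets R α,
          O = {F' | ∃ w ∈ Subgroup.closure
                {g : V ≃ₗᵢ[ℝ] V | ∃ β ∈ {γ ∈ R | ⟪α, γ⟫ = 0}, g = reflAt β},
              F' = ⇑w '' F}}.ncard
        = {F ∈ hypFacets R α | F ⊆ C}.ncard) :=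
  facets_in_hyperplane_chambers_general R hR α
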